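/- arXiv:2503.15380 — 2 statements merged into one kernel-verified Lean document; each statement's English description precedes it below -/
import Mathlib

section
/- Uniqueness of the (n-3f)-subquorum high vote: let votes be a function from a finite signer set S (with |S| ≥ n - f, S a subset of an n-element set, n ≥ 5f + 1) to optional values. If some value v₁ is taken by at least n - 2f elements of S, then v₁ is the unique value taken by at least n - 3f elements of S (no other value v₂ ≠ v₁ is taken by n - 3f or more elements). -/
theorem stmt_12 {α V : Type*} [DecidableEq α] [DecidableEq V]
    (n f : ℕ) (hnf : n ≥ 5 * f + 1)
    (S : Finset α) (hSlo : n - f ≤ S.card) (hShi : S.card ≤ n)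
    (votes : α → Option V) (v₁ : V)
    (hv₁ : n - 2 * f ≤ (S.filter (fun s => votes s = some v₁)).card) :
    ∀ v₂ : V, v₂ ≠ v₁ → (S.filter (fun s => votes s = some v₂)).card < n - 3 * f := by
  intro v₂ hne
  have hdisj : Disjoint (S.filter (fun s => votes s = some v₁))
      (S.filter (fun s => votes s = some v₂)) := by
    rw [Finset.disjoint_filter]
    intro x _ h1 h2
    rw [h1] at h2
    exact hne (Option.some.inj h2).symm
  have hsum := Finset.card_union_of_disjoint hdisj
  have hle : (S.filter (fun s => votes s = some v₁)).card +
      (S.filter (fun s => votes s = some v₂)).card ≤ n := by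
    rw [← hsum]
    exact (Finset.card_le_card (Finset.union_subset (Finset.filter_subset _ _)
      (Finset.filter_subset _ _))).trans hShi
  omega
end

section
/- A commit QC high vote forms a unique subquorum in a same-view timeout QC: suppose n ≥ 5f + 1, and in view v a commit QC cqc and a timeout QC tqc both have signer sets of size ≥ n - f. Every correct replica that signs both sent a timeout vote whose high vote equals cqc.vote, and every correct signer of cqc that signs tqc does so. Then the set of tqc-signers whose high vote equals cqc.vote has size ≥ n - 3f, and any set of tqc-signers whose high votes all equal some common value ≠ cqc.vote has size ≤ 2f < n - 3f. -/
theorem stmt_16 {α V : Type*} [DecidableEq α] [DecidableEq V]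
    (n f : ℕ) (hnf : n ≥ 5 * f + 1)
    (R Corr Sc St : Finset α) (hR : R.card = n)
    (hCorrR : Corr ⊆ R) (hCorr : Corr.card = n - f)
    (hScR : Sc ⊆ R) (hStR : St ⊆ R)
    (hSc : n - f ≤ Sc.card) (hSt : n - f ≤ St.card)
    (hv : α → V) (cv : V)
    (hhv : ∀ r ∈ Sc ∩ St ∩ Corr, hv r = cv) :
    n - 3 * f ≤ (St.filter (fun r => hv r = cv)).card ∧
      ∀ w : V, w ≠ cv →
        (St.filter (fun r => hv r = w)).card ≤ 2 * f ∧
        (St.filter (fun r => hv r = w)).card < n - 3 * f := by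
  have key : ∀ A B : Finset α, A ⊆ R → B ⊆ R →
      A.card + B.card ≤ n + (A ∩ B).card := by
    intro A B hA hB
    have h1 := Finset.card_union_add_card_inter A B
    have h2 : (A ∪ B).card ≤ n := by
      rw [← hR]; exact Finset.card_le_card (Finset.union_subset hA hB)
    omega
  have h1 := key Sc St hScR hStR
  have h2 := key (Sc ∩ St) Corr (fun x hx => hScR (Finset.mem_inter.1 hx).1) hCorrR
  -- first part
  have hsub : Sc ∩ St ∩ Corr ⊆ St.filter (fun r => hv r = cv) := by
    intro r hr
    simp only [Finset.mem_filter]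
    exact ⟨(Finset.mem_inter.1 (Finset.mem_inter.1 hr).1).2, hhv r hr⟩
  have hcard1 := Finset.card_le_card hsub
  refine ⟨by omega, ?_⟩
  intro w hw
  have hsub2 : St.filter (fun r => hv r = w) ⊆ R \ (Sc ∩ Corr) := by
    intro r hr
    simp only [Finset.mem_filter] at hr
    simp only [Finset.mem_sdiff, Finset.mem_inter]
    refine ⟨hStR hr.1, fun hsc => hw ?_⟩
    rw [← hr.2]
    exact (hhv r (by simp [Finset.mem_inter, hsc.1, hsc.2, hr.1]))
  have hcard2 := Finset.card_le_card hsub2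
  have hsd : (R \ (Sc ∩ Corr)).card = n - (Sc ∩ Corr).card := by
    rw [Finset.card_sdiff_of_subset (fun x hx => hScR (Finset.mem_inter.1 hx).1), hR]
  have h3 := key Sc Corr hScR hCorrR
  have hle : (Sc ∩ Corr).card ≤ n := by
    rw [← hR]; exact Finset.card_le_card (fun x hx => hScR (Finset.mem_inter.1 hx).1)
  omega
end
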